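/- arXiv:2106.11955 — 2 statements merged into one kernel-verified Lean document; each statement's English description precedes it below -/
import Mathlib

section
/- Let g be a semisimple (finite-dimensional real) Lie algebra with decomposition g = s_1 ⊕ ... ⊕ s_r into simple ideals, and let h ≤ g be a proper Lie subalgebra that surjects onto every simple factor s_i under the canonical projections. Then there exist indices j ≠ k such that the projection of h onto s_j ⊕ s_k is the graph of a Lie algebra isomorphism s_j ≅ s_k. -/
open DirectSum

/-!
Write `φ i : h → s i` for the projections, all surjective, and let `I j S = jointKerImage φ j S`
be the image under `φ j` of the elements of `h` killed by every `φ k`, `k ∈ S`; surjectivity of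
`φ j` makes it an ideal of `s j`. As `h ≠ g`, some `I j {k | k ≠ j}` is proper. Since
`⁅I j S, I j T⁆ ≤ I j (S ∪ T)` and `s j` is perfect, some `I j {k}` with `k ≠ j` is proper,
hence zero, i.e. `ker φ k ≤ ker φ j`. Simplicity of `s k` then forces `I k {j} = 0` as well, so
`φ j` and `φ k` have the same kernel and `s j ≅ h ⧸ ker φ j ≅ s k`, with graph the image of `h`.
-/

theorem LieAlgebra.IsSimple.top_lie_top (R L : Type*) [CommRing R] [LieRing L] [LieAlgebra R L]
    [LieAlgebra.IsSimple R L] : ⁅(⊤ : LieIdeal R L), (⊤ : LieIdeal R L)⁆ = ⊤ := by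
  refine (IsSimple.eq_bot_or_eq_top _).resolve_left fun h => IsSimple.non_abelian R (L := L) ?_
  rw [← LieSubmodule.lie_abelian_iff_lie_self_eq_bot] at h
  exact (lie_abelian_iff_equiv_lie_abelian LieIdeal.topEquiv).mp h

section JointKerImage

variable {R L ι : Type*} {M : ι → Type*} [CommRing R] [LieRing L] [LieAlgebra R L]
  [∀ i, LieRing (M i)] [∀ i, LieAlgebra R (M i)]

def jointKerImage (φ : ∀ i, L →ₗ⁅R⁆ M i) (j : ι) (S : Set ι) : LieIdeal R (M j) :=
  LieIdeal.map (φ j) (⨅ k ∈ S, (φ k).ker)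

variable {φ : ∀ i, L →ₗ⁅R⁆ M i} {j : ι}

theorem mem_jointKerImage (hj : Function.Surjective (φ j)) {S : Set ι} {y : M j} :
    y ∈ jointKerImage φ j S ↔ ∃ x, φ j x = y ∧ ∀ k ∈ S, φ k x = 0 := by
  constructor
  · intro hy
    obtain ⟨⟨x, hx⟩, rfl⟩ := LieIdeal.mem_map_of_surjective hj hy
    simp only [LieSubmodule.mem_iInf, LieHom.mem_ker] at hx
    exact ⟨x, rfl, hx⟩
  · rintro ⟨x, rfl, hx⟩
    exact LieIdeal.mem_map (by simpa only [LieSubmodule.mem_iInf, LieHom.mem_ker] using hx)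

theorem jointKerImage_empty (hj : Function.Surjective (φ j)) : jointKerImage φ j ∅ = ⊤ := by
  rw [eq_top_iff]
  rintro y -
  obtain ⟨x, rfl⟩ := hj y
  exact (mem_jointKerImage hj).mpr ⟨x, rfl, fun _ => False.elim⟩

theorem lie_jointKerImage_le (hj : Function.Surjective (φ j)) (S T : Set ι) :
    ⁅jointKerImage φ j S, jointKerImage φ j T⁆ ≤ jointKerImage φ j (S ∪ T) := by
  rw [jointKerImage, jointKerImage, jointKerImage, ← LieIdeal.map_bracket_eq _ hj, iInf_union]
  exact LieIdeal.map_mono (LieSubmodule.lie_le_inf _ _)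

theorem jointKerImage_eq_top_of_forall_singleton
    (hperf : ⁅(⊤ : LieIdeal R (M j)), (⊤ : LieIdeal R (M j))⁆ = ⊤)
    (hj : Function.Surjective (φ j)) {S : Set ι} (hS : S.Finite)
    (htop : ∀ k ∈ S, jointKerImage φ j {k} = ⊤) : jointKerImage φ j S = ⊤ := by
  induction S, hS using Set.Finite.induction_on with
  | empty => exact jointKerImage_empty hj
  | @insert k S _ _ ih =>
    have hS := ih fun k' hk' => htop k' (Set.mem_insert_of_mem k hk')
    rw [eq_top_iff, Set.insert_eq, ← hperf]
    calc ⁅(⊤ : LieIdeal R (M j)), (⊤ : LieIdeal R (M j))⁆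
        = ⁅jointKerImage φ j {k}, jointKerImage φ j S⁆ := by rw [htop k (Set.mem_insert k S), hS]
      _ ≤ jointKerImage φ j ({k} ∪ S) := lie_jointKerImage_le hj {k} S

theorem jointKerImage_singleton_eq_bot_iff {k : ι} :
    jointKerImage φ j {k} = ⊥ ↔ (φ k).ker ≤ (φ j).ker := by
  simp [jointKerImage]

-- Were `φ k (ker φ j)` all of `M k`, every `x` would lie in `ker φ j + ker φ k ≤ ker φ j`.
theorem jointKerImage_singleton_eq_bot_symm [Nontrivial (M j)] {k : ι}
    [LieAlgebra.IsSimple R (M k)] (hj : Function.Surjective (φ j))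
    (hk : Function.Surjective (φ k)) (hjk : jointKerImage φ j {k} = ⊥) :
    jointKerImage φ k {j} = ⊥ := by
  refine (LieAlgebra.IsSimple.eq_bot_or_eq_top _).resolve_right fun htop => ?_
  obtain ⟨y, hy⟩ := exists_ne (0 : M j)
  obtain ⟨x, rfl⟩ := hj y
  obtain ⟨x', hx'k, hx'j⟩ := (mem_jointKerImage hk).mp (htop ▸ LieSubmodule.mem_top (φ k x))
  have hmem : φ j (x - x') ∈ jointKerImage φ j {k} :=
    (mem_jointKerImage hj).mpr ⟨x - x', rfl, by simp [hx'k]⟩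
  rw [hjk, LieSubmodule.mem_bot, map_sub, hx'j j rfl, sub_zero] at hmem
  exact hy hmem

theorem exists_jointKerImage_singleton_eq_bot [Finite ι] [LieAlgebra.IsSimple R (M j)]
    (hj : Function.Surjective (φ j)) (hne : jointKerImage φ j {j}ᶜ ≠ ⊤) :
    ∃ k ≠ j, jointKerImage φ j {k} = ⊥ := by
  by_contra! h
  exact hne <| jointKerImage_eq_top_of_forall_singleton (LieAlgebra.IsSimple.top_lie_top R _) hj
    (Set.toFinite _) fun k hk => (LieAlgebra.IsSimple.eq_bot_or_eq_top _).resolve_left (h k hk)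

end JointKerImage

namespace LieHom

variable {R L M₁ M₂ : Type*} [CommRing R] [LieRing L] [LieAlgebra R L]
  [LieRing M₁] [LieAlgebra R M₁] [LieRing M₂] [LieAlgebra R M₂]

theorem exists_lieEquiv_graph_of_ker_eq {φ : L →ₗ⁅R⁆ M₁} {ψ : L →ₗ⁅R⁆ M₂}
    (hφ : Function.Surjective φ) (hψ : Function.Surjective ψ) (hker : φ.ker = ψ.ker) :
    ∃ e : M₁ ≃ₗ⁅R⁆ M₂, ∀ a b, (∃ x, φ x = a ∧ ψ x = b) ↔ e a = b := by
  let e : M₁ ≃ₗ[R] M₂ :=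
    ((φ : L →ₗ[R] M₁).quotKerEquivOfSurjective hφ).symm.trans <|
      (Submodule.quotEquivOfEq _ _ (by rw [← ker_toSubmodule, ← ker_toSubmodule, hker])).trans <|
        (ψ : L →ₗ[R] M₂).quotKerEquivOfSurjective hψ
  have he : ∀ x, e (φ x) = ψ x := fun x => by
    have hx : ((φ : L →ₗ[R] M₁).quotKerEquivOfSurjective hφ).symm (φ x) =
        Submodule.Quotient.mk x :=
      (LinearEquiv.symm_apply_eq _).mpr (LinearMap.quotKerEquivOfSurjective_apply_mk _ hφ x).symm
    simp only [e, LinearEquiv.trans_apply, hx, Submodule.quotEquivOfEq_mk,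
      LinearMap.quotKerEquivOfSurjective_apply_mk, coe_toLinearMap]
  refine ⟨{ e with map_lie' := fun {a b} => ?_ }, fun a b => ⟨?_, ?_⟩⟩
  · obtain ⟨x, rfl⟩ := hφ a
    obtain ⟨y, rfl⟩ := hφ b
    simp [← map_lie, he]
  · rintro ⟨x, rfl, rfl⟩
    exact he x
  · rintro rfl
    obtain ⟨x, rfl⟩ := hφ a
    exact ⟨x, rfl, (he x).symm⟩

end LieHom

namespace LieSubalgebra

variable {R ι : Type*} {M : ι → Type*} [CommRing R] [∀ i, LieRing (M i)] [∀ i, LieAlgebra R (M i)]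

def componentHom (h : LieSubalgebra R (⨁ i, M i)) (i : ι) : h →ₗ⁅R⁆ M i :=
  (lieAlgebraComponent R ι M i).comp h.incl

theorem eq_top_of_jointKerImage_compl_eq_top {h : LieSubalgebra R (⨁ i, M i)}
    (hsurj : ∀ i, Function.Surjective (h.componentHom i))
    (htop : ∀ i, jointKerImage h.componentHom i {i}ᶜ = ⊤) : h = ⊤ := by
  classical
  rw [eq_top_iff]
  rintro x -
  induction x using DirectSum.induction_on with
  | zero => exact zero_mem h
  | add x y hx hy => exact add_mem hx hy
  | of i y =>
    obtain ⟨⟨x, hx⟩, hxi, hx0⟩ :=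
      (mem_jointKerImage (hsurj i)).mp (htop i ▸ LieSubmodule.mem_top y)
    convert hx
    ext k
    by_cases hk : k = i
    · subst hk
      rw [of_eq_same]
      exact hxi.symm
    · rw [of_eq_of_ne _ _ _ hk]
      exact (hx0 k hk).symm

end LieSubalgebra

theorem surjects_onto_every_factor_implies_graph_general
    (r : ℕ) (s : Fin r → Type*)
    [∀ i, LieRing (s i)] [∀ i, LieAlgebra ℝ (s i)]
    [∀ i, LieAlgebra.IsSimple ℝ (s i)]
    (h : LieSubalgebra ℝ (⨁ i, s i)) (hprop : h ≠ ⊤)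
    (hsurj : ∀ i, ∀ y : s i, ∃ x ∈ h, x i = y) :
    ∃ j k, j ≠ k ∧ ∃ e : s j ≃ₗ⁅ℝ⁆ s k,
      ∀ p : s j × s k, (∃ x ∈ h, x j = p.1 ∧ x k = p.2) ↔ e p.1 = p.2 := by
  have hφ (i : Fin r) : Function.Surjective (h.componentHom i) := fun y =>
    let ⟨x, hx, hxy⟩ := hsurj i y
    ⟨⟨x, hx⟩, hxy⟩
  obtain ⟨j, hj⟩ : ∃ j, jointKerImage h.componentHom j {j}ᶜ ≠ ⊤ := by
    by_contra! htop
    exact hprop (LieSubalgebra.eq_top_of_jointKerImage_compl_eq_top hφ htop)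
  obtain ⟨k, hkj, hjk⟩ := exists_jointKerImage_singleton_eq_bot (hφ j) hj
  have := LieAlgebra.IsSimple.nontrivial ℝ (s j)
  have hkj' := jointKerImage_singleton_eq_bot_symm (hφ j) (hφ k) hjk
  obtain ⟨e, he⟩ := LieHom.exists_lieEquiv_graph_of_ker_eq (hφ j) (hφ k) <|
    le_antisymm (jointKerImage_singleton_eq_bot_iff.mp hkj')
      (jointKerImage_singleton_eq_bot_iff.mp hjk)
  refine ⟨j, k, hkj.symm, e, fun p => ?_⟩
  rw [← he]
  exact ⟨fun ⟨x, hx, hxj, hxk⟩ => ⟨⟨x, hx⟩, hxj, hxk⟩, fun ⟨⟨x, hx⟩, hxj, hxk⟩ => ⟨x, hx, hxj, hxk⟩⟩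

/-- If `h` is a proper Lie subalgebra of a finite-dimensional real
semisimple Lie algebra `g = s₁ ⊕ ⋯ ⊕ s_r` (decomposition into simple ideals) which
surjects onto every simple factor, then there are indices `j ≠ k` such that the
projection of `h` onto `s_j ⊕ s_k` is the graph of a Lie algebra isomorphism
`s_j ≅ s_k`. -/
theorem surjects_onto_every_factor_implies_graph
    (r : ℕ) (s : Fin r → Type*)
    [∀ i, LieRing (s i)] [∀ i, LieAlgebra ℝ (s i)]
    [∀ i, FiniteDimensional ℝ (s i)] [∀ i, LieAlgebra.IsSimple ℝ (s i)]
    (h : LieSubalgebra ℝ (⨁ i, s i)) (hprop : h ≠ ⊤)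
    (hsurj : ∀ i, ∀ y : s i, ∃ x ∈ h, x i = y) :
    ∃ j k, j ≠ k ∧ ∃ e : s j ≃ₗ⁅ℝ⁆ s k,
      ∀ p : s j × s k, (∃ x ∈ h, x j = p.1 ∧ x k = p.2) ↔ e p.1 = p.2 :=
  surjects_onto_every_factor_implies_graph_general r s h hprop hsurj
end

section
/- Let g be a finite-dimensional semisimple Lie algebra over a field of characteristic zero, written as a direct sum of homogeneous components c_1, ..., c_m (each c_ℓ a sum of mutually isomorphic simple ideals, with no simple summand shared between distinct c_ℓ). If a Lie subalgebra h ≤ g surjects onto each c_ℓ, then h = g. -/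
/-!
Fix a simple coordinate `(ℓ₀, j₀)` of `g` and let `π q : h → s q.1` be the coordinate
projections, all surjective. For every other coordinate `q`, the ideal `ker (π q)` of `h` still
surjects onto `s ℓ₀` under `π (ℓ₀, j₀)`: if `q` lies in the same component this is read off
directly from the surjection onto `c ℓ₀`; otherwise `π (ℓ₀, j₀)` would factor through `π q` and
give `s ℓ ≅ s ℓ₀`. As `s ℓ₀` is perfect, two ideals surjecting onto it have a bracket, hence an
intersection, surjecting onto it. So some element of `h` has any prescribed value at `(ℓ₀, j₀)`
and vanishes at every other coordinate; these elements span `g`.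
-/

open DirectSum

namespace LieHom

variable {K L S T : Type*} [CommRing K] [LieRing L] [LieAlgebra K L]
  [LieRing S] [LieAlgebra K S] [LieRing T] [LieAlgebra K T]

noncomputable def quotKerEquivOfSurjective (f : L →ₗ⁅K⁆ S) (hf : Function.Surjective f) :
    (L ⧸ f.ker) ≃ₗ⁅K⁆ S :=
  f.quotKerEquivRange.trans <|
    (LieEquiv.ofEq _ _ (by rw [f.range_eq_top.mpr hf])).trans LieSubalgebra.topEquiv

theorem nonempty_equiv_of_ker_eq {f : L →ₗ⁅K⁆ S} {g : L →ₗ⁅K⁆ T}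
    (hf : Function.Surjective f) (hg : Function.Surjective g) (h : f.ker = g.ker) :
    Nonempty (S ≃ₗ⁅K⁆ T) := by
  have e := g.quotKerEquivOfSurjective hg
  rw [← h] at e
  exact ⟨(f.quotKerEquivOfSurjective hf).symm.trans e⟩

theorem ker_eq_of_ker_le [LieAlgebra.IsSimple K T] [Nontrivial S] {f : L →ₗ⁅K⁆ S}
    {g : L →ₗ⁅K⁆ T} (hf : Function.Surjective f) (hg : Function.Surjective g)
    (h : g.ker ≤ f.ker) : f.ker = g.ker := by
  refine le_antisymm ?_ h
  rcases LieAlgebra.IsSimple.eq_bot_or_eq_top (f.ker.map g) with hbot | htop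
  · exact LieIdeal.map_eq_bot_iff.mp hbot
  · have hcomap := LieIdeal.comap_map_eq (f := g) (I := f.ker)
      (congrArg SetLike.coe (LieIdeal.coe_map_of_surjective hg))
    rw [htop, sup_eq_left.mpr h] at hcomap
    obtain ⟨t, ht⟩ := exists_ne (0 : S)
    obtain ⟨x, rfl⟩ := hf t
    exact (ht (f.mem_ker.mp (hcomap ▸ LieIdeal.mem_comap.mpr (LieSubmodule.mem_top _)))).elim

theorem map_ker_eq_top_of_isEmpty_lieEquiv [LieAlgebra.IsSimple K S] [LieAlgebra.IsSimple K T]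
    {f : L →ₗ⁅K⁆ S} {g : L →ₗ⁅K⁆ T} (hf : Function.Surjective f) (hg : Function.Surjective g)
    (hST : IsEmpty (T ≃ₗ⁅K⁆ S)) : g.ker.map f = ⊤ := by
  have := LieAlgebra.IsSimple.nontrivial K S
  refine (LieAlgebra.IsSimple.eq_bot_or_eq_top _).resolve_left fun hbot => ?_
  have hker := ker_eq_of_ker_le hf hg (LieIdeal.map_eq_bot_iff.mp hbot)
  exact hST.false (nonempty_equiv_of_ker_eq hg hf hker.symm).some

end LieHom

theorem LieAlgebra.IsSimple.lie_top_eq_top (K S : Type*) [CommRing K] [LieRing S]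
    [LieAlgebra K S] [LieAlgebra.IsSimple K S] :
    ⁅(⊤ : LieIdeal K S), (⊤ : LieIdeal K S)⁆ = ⊤ :=
  lie_eq_self_of_isAtom_of_nonabelian ⊤ (LieAlgebra.IsSimple.isAtom_top K S) <| by
    rw [lie_abelian_iff_equiv_lie_abelian LieIdeal.topEquiv]
    exact LieAlgebra.IsSimple.non_abelian K

namespace LieIdeal

variable {K L S : Type*} [CommRing K] [LieRing L] [LieAlgebra K L] [LieRing S] [LieAlgebra K S]
  {f : L →ₗ⁅K⁆ S}

theorem map_inf_eq_top (hf : Function.Surjective f)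
    (hS : ⁅(⊤ : LieIdeal K S), (⊤ : LieIdeal K S)⁆ = ⊤)
    {I J : LieIdeal K L} (hI : I.map f = ⊤) (hJ : J.map f = ⊤) : (I ⊓ J).map f = ⊤ :=
  top_unique <| calc
    ⊤ = ⁅I.map f, J.map f⁆ := by rw [hI, hJ, hS]
    _ = ⁅I, J⁆.map f := (map_bracket_eq f hf).symm
    _ ≤ (I ⊓ J).map f := map_mono (LieSubmodule.lie_le_inf I J)

theorem map_finset_inf_eq_top (hf : Function.Surjective f)
    (hS : ⁅(⊤ : LieIdeal K S), (⊤ : LieIdeal K S)⁆ = ⊤)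
    {ι : Type*} (F : Finset ι) {I : ι → LieIdeal K L} (hI : ∀ i ∈ F, (I i).map f = ⊤) :
    (F.inf I).map f = ⊤ :=
  Finset.inf_induction (p := fun J : LieIdeal K L => J.map f = ⊤)
    (by rw [← f.idealRange_eq_map, f.idealRange_eq_top_of_surjective hf])
    (fun _ hI _ hJ => map_inf_eq_top hf hS hI hJ) hI

end LieIdeal

theorem DirectSum.eq_of_of_of_apply_eq_zero {ι : Type*} [DecidableEq ι] {κ : ι → Type*}
    [∀ i, DecidableEq (κ i)] {S : ι → Type*} [∀ i, AddCommMonoid (S i)]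
    (x : ⨁ i, ⨁ _ : κ i, S i) (i₀ : ι) (j₀ : κ i₀)
    (hx : ∀ i j, (⟨i, j⟩ : (i : ι) × κ i) ≠ ⟨i₀, j₀⟩ → x i j = 0) :
    x = of _ i₀ (of _ j₀ (x i₀ j₀)) := by
  ext i j
  rcases eq_or_ne i i₀ with rfl | hi
  · rcases eq_or_ne j j₀ with rfl | hj
    · simp only [of_eq_same]
    · rw [of_eq_same, of_eq_of_ne _ _ _ hj, hx i j (by simp [hj])]
  · rw [of_eq_of_ne _ _ _ hi, zero_apply, hx i j (by simp [hi])]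

namespace LieSubalgebra

variable {K : Type*} [CommRing K] {ι : Type*} {κ : ι → Type*} {S : ι → Type*}
  [∀ i, LieRing (S i)] [∀ i, LieAlgebra K (S i)] (h : LieSubalgebra K (⨁ i, ⨁ _ : κ i, S i))

def coordinate (q : (i : ι) × κ i) : h →ₗ⁅K⁆ S q.1 :=
  (lieAlgebraComponent K _ _ q.2).comp ((lieAlgebraComponent K _ _ q.1).comp h.incl)

theorem coordinate_apply (q : (i : ι) × κ i) (x : h) :
    h.coordinate q x = (x : ⨁ i, ⨁ _ : κ i, S i) q.1 q.2 :=
  rfl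

variable [∀ i, DecidableEq (κ i)]

theorem coordinate_surjective (hsurj : ∀ i (y : ⨁ _ : κ i, S i), ∃ x ∈ h, x i = y)
    (q : (i : ι) × κ i) : Function.Surjective (h.coordinate q) := by
  intro t
  obtain ⟨x, hx, hxt⟩ := hsurj q.1 (of _ q.2 t)
  exact ⟨⟨x, hx⟩, by rw [coordinate_apply, hxt, of_eq_same]⟩

theorem map_ker_coordinate_eq_top (hsurj : ∀ i (y : ⨁ _ : κ i, S i), ∃ x ∈ h, x i = y)
    {i : ι} {j j₀ : κ i} (hj : j ≠ j₀) :
    (h.coordinate (Sigma.mk i j)).ker.map (h.coordinate (Sigma.mk i j₀)) = ⊤ := by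
  refine eq_top_iff.mpr fun t _ => ?_
  obtain ⟨x, hx, hxt⟩ := hsurj i (of _ j₀ t)
  have hker : (⟨x, hx⟩ : h) ∈ (h.coordinate (Sigma.mk i j)).ker := by
    rw [LieHom.mem_ker, coordinate_apply, hxt, of_eq_of_ne _ _ _ hj]
  simpa only [coordinate_apply, hxt, of_eq_same]
    using LieIdeal.mem_map (f := h.coordinate (Sigma.mk i j₀)) hker

variable [DecidableEq ι]

theorem eq_top_of_of_of_mem (hh : ∀ i j (t : S i), of _ i (of _ j t) ∈ h) : h = ⊤ := by
  suffices ∀ x, x ∈ h from eq_top_iff.mpr fun x _ => this x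
  intro x
  induction x using DirectSum.induction_on with
  | zero => exact h.zero_mem
  | of i y =>
    induction y using DirectSum.induction_on with
    | zero => simpa only [map_zero] using h.zero_mem
    | of j t => exact hh i j t
    | add y y' hy hy' => simpa only [map_add] using h.add_mem hy hy'
  | add x x' hx hx' => exact h.add_mem hx hx'

theorem of_of_coordinate_mem [Fintype ((i : ι) × κ i)] {q₀ : (i : ι) × κ i} {x : h}
    (hx : x ∈ (Finset.univ.erase q₀).inf fun q => (h.coordinate q).ker) :
    of _ q₀.1 (of _ q₀.2 (h.coordinate q₀ x)) ∈ h := by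
  have hx0 : ∀ i j, (⟨i, j⟩ : (i : ι) × κ i) ≠ q₀ → (x : ⨁ i, ⨁ _ : κ i, S i) i j = 0 :=
    fun i j hq => LieHom.mem_ker.mp <| SetLike.le_def.mp (Finset.inf_le
      (f := fun q => (h.coordinate q).ker) (Finset.mem_erase.mpr ⟨hq, Finset.mem_univ _⟩)) hx
  rw [coordinate_apply, ← DirectSum.eq_of_of_of_apply_eq_zero _ _ _ hx0]
  exact x.2

end LieSubalgebra

theorem eq_top_of_surjects_onto_homogeneous_components_general
    (K : Type*) [Field K]
    (m : ℕ) (s : Fin m → Type*)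
    [∀ ℓ, LieRing (s ℓ)] [∀ ℓ, LieAlgebra K (s ℓ)]
    [∀ ℓ, LieAlgebra.IsSimple K (s ℓ)]
    (n : Fin m → ℕ)
    (hdistinct : ∀ ℓ ℓ', ℓ ≠ ℓ' → IsEmpty (s ℓ ≃ₗ⁅K⁆ s ℓ'))
    (h : LieSubalgebra K (⨁ ℓ, (⨁ _j : Fin (n ℓ), s ℓ)))
    (hsurj : ∀ ℓ, ∀ y : ⨁ _j : Fin (n ℓ), s ℓ, ∃ x ∈ h, x ℓ = y) :
    h = ⊤ := by
  refine h.eq_top_of_of_of_mem fun ℓ₀ j₀ t => ?_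
  have hcoord := h.coordinate_surjective hsurj
  have hsep : ∀ q ∈ Finset.univ.erase ⟨ℓ₀, j₀⟩,
      (h.coordinate q).ker.map (h.coordinate ⟨ℓ₀, j₀⟩) = ⊤ := by
    rintro ⟨ℓ, j⟩ hq
    rcases eq_or_ne ℓ ℓ₀ with rfl | hℓ
    · exact h.map_ker_coordinate_eq_top hsurj fun hj => Finset.ne_of_mem_erase hq (hj ▸ rfl)
    · exact LieHom.map_ker_eq_top_of_isEmpty_lieEquiv (hcoord _) (hcoord _) (hdistinct ℓ ℓ₀ hℓ)
  have hmap := LieIdeal.map_finset_inf_eq_top (hcoord ⟨ℓ₀, j₀⟩)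
    (LieAlgebra.IsSimple.lie_top_eq_top K (s ℓ₀)) _ hsep
  obtain ⟨x, hxt⟩ := LieIdeal.mem_map_of_surjective (hcoord _) (hmap ▸ LieSubmodule.mem_top t)
  exact hxt ▸ h.of_of_coordinate_mem x.2

/-- Let `g` be a finite-dimensional semisimple Lie algebra over a field of
characteristic zero, written as the direct sum of homogeneous components
`c ℓ = (s ℓ)^{⊕ n ℓ}` (each a sum of mutually isomorphic simple ideals, no simple summand
shared between distinct homogeneous components, i.e. `s ℓ ≇ s ℓ'` for `ℓ ≠ ℓ'`).
If a Lie subalgebra `h ≤ g` surjects onto each homogeneous component, then `h = g`. -/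
theorem eq_top_of_surjects_onto_homogeneous_components
    (K : Type*) [Field K] [CharZero K]
    (m : ℕ) (s : Fin m → Type*)
    [∀ ℓ, LieRing (s ℓ)] [∀ ℓ, LieAlgebra K (s ℓ)]
    [∀ ℓ, FiniteDimensional K (s ℓ)] [∀ ℓ, LieAlgebra.IsSimple K (s ℓ)]
    (n : Fin m → ℕ)
    (hdistinct : ∀ ℓ ℓ', ℓ ≠ ℓ' → IsEmpty (s ℓ ≃ₗ⁅K⁆ s ℓ'))
    (h : LieSubalgebra K (⨁ ℓ, (⨁ _j : Fin (n ℓ), s ℓ)))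
    (hsurj : ∀ ℓ, ∀ y : ⨁ _j : Fin (n ℓ), s ℓ, ∃ x ∈ h, x ℓ = y) :
    h = ⊤ :=
  eq_top_of_surjects_onto_homogeneous_components_general K m s n hdistinct h hsurj
end
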